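/- (Matrix binary Darboux transformation, Section 4) Let (Ω, d, d̄) be a bidifferential calculus with A = Ω^0. Let Δ be n×n over A and λ n×n over Ω^1 with d̄Δ + [λ,Δ] = (dΔ)Δ and d̄λ + λ² = (dλ)Δ; let Γ be n×n over A and κ n×n over Ω^1 with d̄Γ − [κ,Γ] = Γ(dΓ) and d̄κ − κ² = Γ(dκ). Let φ₀ be an m×m matrix over A with d d̄ φ₀ + (dφ₀)(dφ₀) = 0. Let θ (m×n over A) satisfy d̄θ = (dφ₀)θ + (dθ)Δ + θλ, let η (n×m over A) satisfy d̄η = −η(dφ₀) + Γ(dη) + κη, and let Ω̂ be an invertible n×n matrix over A with ΓΩ̂ − Ω̂Δ = ηθ and d̄Ω̂ = (dΩ̂)Δ − (dΓ)Ω̂ + κΩ̂ + Ω̂λ + (dη)θ. Then φ := φ₀ − θ Ω̂^{-1} η solves d d̄ φ + (dφ)(dφ) = 0, and q := θ Ω̂^{-1}, r := Ω̂^{-1} η satisfy d̄q = (dφ)q + d(qΓ) − qκ and d̄r = −r(dφ) + d(Δr) − λr. -/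
import Mathlib


/-- A bidifferential calculus: a unital graded associative algebra
`Ω = ⊕_{r≥0} Ω^r` over a field `𝕂`, together with two `𝕂`-linear graded
derivations `d`, `dbar` of degree one satisfying `d² = d̄² = d d̄ + d̄ d = 0`. -/
structure BidiffCalculus (𝕂 : Type) [Field 𝕂] (Ω : Type) [Ring Ω] [Algebra 𝕂 Ω] where
  grade : ℕ → Submodule 𝕂 Ω
  internal : DirectSum.IsInternal grade
  one_mem : (1 : Ω) ∈ grade 0
  mul_mem : ∀ (r s : ℕ), ∀ a ∈ grade r, ∀ b ∈ grade s, a * b ∈ grade (r + s)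
  d : Ω →ₗ[𝕂] Ω
  dbar : Ω →ₗ[𝕂] Ω
  d_grade : ∀ (r : ℕ), ∀ a ∈ grade r, d a ∈ grade (r + 1)
  dbar_grade : ∀ (r : ℕ), ∀ a ∈ grade r, dbar a ∈ grade (r + 1)
  d_leibniz : ∀ (r : ℕ), ∀ a ∈ grade r, ∀ b : Ω,
      d (a * b) = d a * b + ((-1 : ℤ) ^ r) • (a * d b)
  dbar_leibniz : ∀ (r : ℕ), ∀ a ∈ grade r, ∀ b : Ω,
      dbar (a * b) = dbar a * b + ((-1 : ℤ) ^ r) • (a * dbar b)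
  d_d : ∀ a : Ω, d (d a) = 0
  dbar_dbar : ∀ a : Ω, dbar (dbar a) = 0
  d_dbar_anticomm : ∀ a : Ω, d (dbar a) + dbar (d a) = 0

namespace BidiffCalculus

variable {𝕂 : Type} [Field 𝕂] {Ω : Type} [Ring Ω] [Algebra 𝕂 Ω]

/-- Entrywise action of `d` on matrices over `Ω`. -/
def matD (S : BidiffCalculus 𝕂 Ω) {m n : ℕ} (M : Matrix (Fin m) (Fin n) Ω) :
    Matrix (Fin m) (Fin n) Ω := M.map S.d

/-- Entrywise action of `dbar` on matrices over `Ω`. -/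
def matDbar (S : BidiffCalculus 𝕂 Ω) {m n : ℕ} (M : Matrix (Fin m) (Fin n) Ω) :
    Matrix (Fin m) (Fin n) Ω := M.map S.dbar

/-- A matrix has all entries of degree `r`. -/
def MatIn (S : BidiffCalculus 𝕂 Ω) (r : ℕ) {m n : ℕ} (M : Matrix (Fin m) (Fin n) Ω) : Prop :=
  ∀ i j, M i j ∈ S.grade r

end BidiffCalculus

namespace BidiffCalculus

variable {𝕂 : Type} [Field 𝕂] {Ω : Type} [Ring Ω] [Algebra 𝕂 Ω] (S : BidiffCalculus 𝕂 Ω)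

lemma d_one : S.d 1 = 0 := by
  have h := S.d_leibniz 0 1 S.one_mem 1
  simp only [one_mul, mul_one, pow_zero, one_smul] at h
  nth_rewrite 1 [← add_zero (S.d 1)] at h
  exact (add_left_cancel h).symm

lemma dbar_one : S.dbar 1 = 0 := by
  have h := S.dbar_leibniz 0 1 S.one_mem 1
  simp only [one_mul, mul_one, pow_zero, one_smul] at h
  nth_rewrite 1 [← add_zero (S.dbar 1)] at h
  exact (add_left_cancel h).symm

lemma matD_add {p q : ℕ} (A B : Matrix (Fin p) (Fin q) Ω) :
    S.matD (A + B) = S.matD A + S.matD B := by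
  ext i j
  simp [matD, Matrix.map_apply, Matrix.add_apply]

lemma matD_sub {p q : ℕ} (A B : Matrix (Fin p) (Fin q) Ω) :
    S.matD (A - B) = S.matD A - S.matD B := by
  ext i j
  simp [matD, Matrix.map_apply, Matrix.sub_apply]

lemma matDbar_sub {p q : ℕ} (A B : Matrix (Fin p) (Fin q) Ω) :
    S.matDbar (A - B) = S.matDbar A - S.matDbar B := by
  ext i j
  simp [matDbar, Matrix.map_apply, Matrix.sub_apply]

lemma matD_one {p : ℕ} : S.matD (1 : Matrix (Fin p) (Fin p) Ω) = 0 := by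
  ext i j
  by_cases h : i = j <;>
    simp [matD, Matrix.map_apply, Matrix.one_apply, h, S.d_one]

lemma matDbar_one {p : ℕ} : S.matDbar (1 : Matrix (Fin p) (Fin p) Ω) = 0 := by
  ext i j
  by_cases h : i = j <;>
    simp [matDbar, Matrix.map_apply, Matrix.one_apply, h, S.dbar_one]

lemma matD_matD {p q : ℕ} (M : Matrix (Fin p) (Fin q) Ω) :
    S.matD (S.matD M) = 0 := by
  ext i j
  simp [matD, Matrix.map_apply, S.d_d]

lemma matD_mul0 {p q r : ℕ} {A : Matrix (Fin p) (Fin q) Ω} (hA : S.MatIn 0 A)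
    (B : Matrix (Fin q) (Fin r) Ω) :
    S.matD (A * B) = S.matD A * B + A * S.matD B := by
  ext i j
  have h : ∀ k, S.d (A i k * B k j) = S.d (A i k) * B k j + A i k * S.d (B k j) := by
    intro k
    rw [S.d_leibniz 0 _ (hA i k)]
    simp
  simp [matD, Matrix.map_apply, Matrix.mul_apply, Matrix.add_apply, map_sum, h,
    Finset.sum_add_distrib]

lemma matDbar_mul0 {p q r : ℕ} {A : Matrix (Fin p) (Fin q) Ω} (hA : S.MatIn 0 A)
    (B : Matrix (Fin q) (Fin r) Ω) :
    S.matDbar (A * B) = S.matDbar A * B + A * S.matDbar B := by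
  ext i j
  have h : ∀ k, S.dbar (A i k * B k j) = S.dbar (A i k) * B k j + A i k * S.dbar (B k j) := by
    intro k
    rw [S.dbar_leibniz 0 _ (hA i k)]
    simp
  simp [matDbar, Matrix.map_apply, Matrix.mul_apply, Matrix.add_apply, map_sum, h,
    Finset.sum_add_distrib]

lemma matD_mul1 {p q r : ℕ} {A : Matrix (Fin p) (Fin q) Ω} (hA : S.MatIn 1 A)
    (B : Matrix (Fin q) (Fin r) Ω) :
    S.matD (A * B) = S.matD A * B - A * S.matD B := by
  ext i j
  have h : ∀ k, S.d (A i k * B k j) = S.d (A i k) * B k j - A i k * S.d (B k j) := by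
    intro k
    rw [S.d_leibniz 1 _ (hA i k)]
    simp [sub_eq_add_neg]
  simp [matD, Matrix.map_apply, Matrix.mul_apply, Matrix.sub_apply, map_sum, h,
    Finset.sum_sub_distrib]

lemma matIn_mul00 {p q r : ℕ} {A : Matrix (Fin p) (Fin q) Ω} {B : Matrix (Fin q) (Fin r) Ω}
    (hA : S.MatIn 0 A) (hB : S.MatIn 0 B) : S.MatIn 0 (A * B) := by
  intro i j
  rw [Matrix.mul_apply]
  exact Submodule.sum_mem _ fun k _ => S.mul_mem 0 0 _ (hA i k) _ (hB k j)

lemma matIn_d1 {p q : ℕ} {A : Matrix (Fin p) (Fin q) Ω} (hA : S.MatIn 0 A) :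
    S.MatIn 1 (S.matD A) := fun i j => S.d_grade 0 _ (hA i j)

end BidiffCalculus


/-- `Φ_{i,j} = θ Δ^i Ω̂^{-1} Γ^j η`, with negative powers given by powers of inverses. -/
def Phi {R : Type} [Ring R] {m n : ℕ} (θ : Matrix (Fin m) (Fin n) R)
    (η : Matrix (Fin n) (Fin m) R) (Δ Γ W : (Matrix (Fin n) (Fin n) R)ˣ) (i j : ℤ) :
    Matrix (Fin m) (Fin m) R :=
  θ * Units.val (Δ ^ i) * Units.val W⁻¹ * Units.val (Γ ^ j) * η

/-- matrix binary Darboux transformation, Section 4. -/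
theorem binary_darboux
    {𝕂 : Type} [Field 𝕂] [CharZero 𝕂] {Ω : Type} [Ring Ω] [Algebra 𝕂 Ω]
    (S : BidiffCalculus 𝕂 Ω) {m n : ℕ}
    (Δ Γ : Matrix (Fin n) (Fin n) Ω) (lam kap : Matrix (Fin n) (Fin n) Ω)
    (hΔ0 : S.MatIn 0 Δ) (hΓ0 : S.MatIn 0 Γ) (hlam1 : S.MatIn 1 lam) (hkap1 : S.MatIn 1 kap)
    (heqΔ : S.matDbar Δ + (lam * Δ - Δ * lam) = S.matD Δ * Δ)
    (heqlam : S.matDbar lam + lam * lam = S.matD lam * Δ)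
    (heqΓ : S.matDbar Γ - (kap * Γ - Γ * kap) = Γ * S.matD Γ)
    (heqkap : S.matDbar kap - kap * kap = Γ * S.matD kap)
    (φ₀ : Matrix (Fin m) (Fin m) Ω) (hφ₀0 : S.MatIn 0 φ₀)
    (hφ₀ : S.matD (S.matDbar φ₀) + S.matD φ₀ * S.matD φ₀ = 0)
    (θ : Matrix (Fin m) (Fin n) Ω) (hθ0 : S.MatIn 0 θ)
    (hlinθ : S.matDbar θ = S.matD φ₀ * θ + S.matD θ * Δ + θ * lam)
    (η : Matrix (Fin n) (Fin m) Ω) (hη0 : S.MatIn 0 η)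
    (hlinη : S.matDbar η = -(η * S.matD φ₀) + Γ * S.matD η + kap * η)
    (W : (Matrix (Fin n) (Fin n) Ω)ˣ)
    (hW0 : S.MatIn 0 (Units.val W)) (hWinv0 : S.MatIn 0 (Units.val W⁻¹))
    (hSyl : Γ * Units.val W - Units.val W * Δ = η * θ)
    (heqW : S.matDbar (Units.val W) = S.matD (Units.val W) * Δ
        - S.matD Γ * Units.val W + kap * Units.val W + Units.val W * lam
        + S.matD η * θ) :
    let φ := φ₀ - θ * Units.val W⁻¹ * η
    let q := θ * Units.val W⁻¹
    let r := Units.val W⁻¹ * η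
    S.matD (S.matDbar φ) + S.matD φ * S.matD φ = 0 ∧
      S.matDbar q = S.matD φ * q + S.matD (q * Γ) - q * kap ∧
      S.matDbar r = -(r * S.matD φ) + S.matD (Δ * r) - lam * r := by
  intro φ q r
  have hφd : φ = φ₀ - θ * Units.val W⁻¹ * η := rfl
  have hqd : q = θ * Units.val W⁻¹ := rfl
  have hrd : r = Units.val W⁻¹ * η := rfl
  rw [hφd, hqd, hrd]
  set Wv := Units.val W with hWvdef
  set V := Units.val W⁻¹ with hVdef
  have hWV : Wv * V = 1 := W.mul_inv
  have hVW : V * Wv = 1 := W.inv_mul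
  -- eliminate Γ via the Sylvester equation
  have h1 : Γ * Wv = η * θ + Wv * Δ := sub_eq_iff_eq_add.mp hSyl
  have hΓ : Γ = (η * θ + Wv * Δ) * V := by
    calc Γ = Γ * (Wv * V) := by rw [hWV, Matrix.mul_one]
    _ = Γ * Wv * V := by rw [Matrix.mul_assoc]
    _ = (η * θ + Wv * Δ) * V := by rw [h1]
  subst hΓ
  -- re-associate the body of φ
  rw [Matrix.mul_assoc θ V η]
  -- grading facts
  have hθV0 : S.MatIn 0 (θ * V) := S.matIn_mul00 hθ0 hWinv0
  have hVη0 : S.MatIn 0 (V * η) := S.matIn_mul00 hWinv0 hη0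
  have hE0 : S.MatIn 0 (η * θ + Wv * Δ) := fun i j =>
    (S.grade 0).add_mem (S.matIn_mul00 hη0 hθ0 i j) (S.matIn_mul00 hW0 hΔ0 i j)
  have hθVη0 : S.MatIn 0 (θ * (V * η)) := S.matIn_mul00 hθ0 hVη0
  -- derivatives of the inverse
  have hdV : S.matD V = -(V * S.matD Wv * V) := by
    have h0 : S.matD V * Wv + V * S.matD Wv = 0 := by
      rw [← S.matD_mul0 hWinv0 Wv, hVW, S.matD_one]
    have h2 : S.matD V * Wv = -(V * S.matD Wv) := eq_neg_of_add_eq_zero_left h0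
    calc S.matD V = S.matD V * (Wv * V) := by rw [hWV, Matrix.mul_one]
    _ = S.matD V * Wv * V := by rw [Matrix.mul_assoc]
    _ = -(V * S.matD Wv) * V := by rw [h2]
    _ = -(V * S.matD Wv * V) := by rw [Matrix.neg_mul]
  have hdbV : S.matDbar V = -(V * S.matDbar Wv * V) := by
    have h0 : S.matDbar V * Wv + V * S.matDbar Wv = 0 := by
      rw [← S.matDbar_mul0 hWinv0 Wv, hVW, S.matDbar_one]
    have h2 : S.matDbar V * Wv = -(V * S.matDbar Wv) := eq_neg_of_add_eq_zero_left h0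
    calc S.matDbar V = S.matDbar V * (Wv * V) := by rw [hWV, Matrix.mul_one]
    _ = S.matDbar V * Wv * V := by rw [Matrix.mul_assoc]
    _ = -(V * S.matDbar Wv) * V := by rw [h2]
    _ = -(V * S.matDbar Wv * V) := by rw [Matrix.neg_mul]
  have hWVX : ∀ {k : ℕ} (X : Matrix (Fin n) (Fin k) Ω), Wv * (V * X) = X := by
    intro k X; rw [← Matrix.mul_assoc, hWV, Matrix.one_mul]
  have hVWX : ∀ {k : ℕ} (X : Matrix (Fin n) (Fin k) Ω), V * (Wv * X) = X := by
    intro k X; rw [← Matrix.mul_assoc, hVW, Matrix.one_mul]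
  -- the r equation (third conjunct)
  have key3 : S.matDbar (V * η) =
      -(V * η * S.matD (φ₀ - θ * (V * η))) + S.matD (Δ * (V * η)) - lam * (V * η) := by
    rw [S.matDbar_mul0 hWinv0 η, hlinη, hdbV, heqW,
        S.matD_mul0 hE0 V, S.matD_add, S.matD_mul0 hη0 θ, S.matD_mul0 hW0 Δ,
        S.matD_sub, S.matD_mul0 hθ0 (V * η), S.matD_mul0 hΔ0 (V * η),
        S.matD_mul0 hWinv0 η, hdV]
    simp only [Matrix.mul_add, Matrix.add_mul, Matrix.mul_sub, Matrix.sub_mul,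
      Matrix.neg_mul, Matrix.mul_neg, Matrix.mul_assoc, sub_eq_add_neg, neg_add_rev,
      neg_neg, hWVX, hVWX, hWV, hVW, Matrix.mul_one, Matrix.one_mul]
    abel
  refine ⟨?_, ?_, key3⟩
  · -- the φ equation (first conjunct)
    have hdbφ : S.matDbar (φ₀ - θ * (V * η)) =
        S.matDbar φ₀ - S.matD φ₀ * (θ * (V * η)) - S.matD θ * (Δ * (V * η))
          + θ * (V * η) * S.matD (φ₀ - θ * (V * η)) - θ * S.matD (Δ * (V * η)) := by
      rw [S.matDbar_sub, S.matDbar_mul0 hθ0 (V * η), hlinθ, key3]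
      simp only [Matrix.mul_add, Matrix.add_mul, Matrix.mul_sub, Matrix.sub_mul,
        Matrix.neg_mul, Matrix.mul_neg, Matrix.mul_assoc, sub_eq_add_neg, neg_add_rev,
        neg_neg]
      abel
    have hB1 : S.matD (S.matDbar φ₀) = -(S.matD φ₀ * S.matD φ₀) :=
      eq_neg_of_add_eq_zero_left hφ₀
    have hB2 : S.matD (S.matD φ₀ * (θ * (V * η)))
        = -(S.matD φ₀ * S.matD (θ * (V * η))) := by
      rw [S.matD_mul1 (S.matIn_d1 hφ₀0) (θ * (V * η)), S.matD_matD, Matrix.zero_mul,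
        zero_sub]
    have hB3 : S.matD (S.matD θ * (Δ * (V * η)))
        = -(S.matD θ * S.matD (Δ * (V * η))) := by
      rw [S.matD_mul1 (S.matIn_d1 hθ0) (Δ * (V * η)), S.matD_matD, Matrix.zero_mul,
        zero_sub]
    have hB4 : S.matD (θ * (V * η) * (S.matD φ₀ - S.matD (θ * (V * η))))
        = S.matD (θ * (V * η)) * (S.matD φ₀ - S.matD (θ * (V * η))) := by
      rw [S.matD_mul0 hθVη0, S.matD_sub, S.matD_matD, S.matD_matD]
      simp
    have hB5 : S.matD (θ * S.matD (Δ * (V * η)))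
        = S.matD θ * S.matD (Δ * (V * η)) := by
      rw [S.matD_mul0 hθ0, S.matD_matD, Matrix.mul_zero, add_zero]
    rw [hdbφ]
    simp only [S.matD_sub, S.matD_add]
    rw [hB1, hB2, hB3, hB4, hB5]
    noncomm_ring
  · -- the q equation (second conjunct)
    rw [S.matDbar_mul0 hθ0 V, hlinθ, hdbV, heqW,
        S.matD_mul0 hθV0 ((η * θ + Wv * Δ) * V),
        S.matD_mul0 hE0 V, S.matD_add, S.matD_mul0 hη0 θ, S.matD_mul0 hW0 Δ,
        S.matD_sub, S.matD_mul0 hθ0 (V * η), S.matD_mul0 hθ0 V,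
        S.matD_mul0 hWinv0 η, hdV]
    simp only [Matrix.mul_add, Matrix.add_mul, Matrix.mul_sub, Matrix.sub_mul,
      Matrix.neg_mul, Matrix.mul_neg, Matrix.mul_assoc, sub_eq_add_neg, neg_add_rev,
      neg_neg, hWVX, hVWX, hWV, hVW, Matrix.mul_one, Matrix.one_mul]
    abel
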